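/- Let H, G : ℝ → ℝ be bounded measurable functions with H(f) + G(f) = 1 for all f, and let S : ℝ → ℝ be integrable on [−1/2, 1/2]. If C_J → 0 as J → ∞, then for every integer J ≥ 1 the tail of the wavelet covariance series equals the scaling covariance one level below: ∑_{j=J}^{∞} γ_j = C_{J−1}. -/

import Mathlib

open Finset MeasureTheory Filter

/-- The level-`J` scaling covariance
`C_J = ∫_{−1/2}^{1/2} (∏_{l=0}^{J−1} G(2^l f)) S(f) df`. -/
noncomputable def scalingCov (G S : ℝ → ℝ) (J : ℕ) : ℝ :=
  ∫ f in (-(1 : ℝ) / 2)..(1 / 2), (∏ l ∈ Finset.range J, G ((2 : ℝ) ^ l * f)) * S f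

/-- The level-`J` wavelet covariance
`γ_J = ∫_{−1/2}^{1/2} H(2^{J−1} f) (∏_{l=0}^{J−2} G(2^l f)) S(f) df`. -/
noncomputable def waveletCov (H G S : ℝ → ℝ) (J : ℕ) : ℝ :=
  ∫ f in (-(1 : ℝ) / 2)..(1 / 2),
    H ((2 : ℝ) ^ (J - 1) * f) * (∏ l ∈ Finset.range (J - 1), G ((2 : ℝ) ^ l * f)) * S f

/-!
Since `H = 1 - G`, the level-`(n+1)` wavelet integrand is the difference of the scaling
integrands at levels `n` and `n + 1`, so `γ_{n+1} = C_n - C_{n+1}`. The partial sums of the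
wavelet series therefore telescope to `C_{J-1} - C_M`, which tends to `C_{J-1}` as `C_M → 0`.
-/

theorem IntervalIntegrable.bdd_mul {𝕜 : Type*} [NormedField 𝕜] {μ : Measure ℝ}
    {a b c : ℝ} {f g : ℝ → 𝕜} (hg : IntervalIntegrable g μ a b)
    (hf : AEStronglyMeasurable f μ) (hf_bound : ∀ x, ‖f x‖ ≤ c) :
    IntervalIntegrable (fun x => f x * g x) μ a b :=
  ⟨hg.1.bdd_mul hf.restrict (ae_of_all _ hf_bound),
    hg.2.bdd_mul hf.restrict (ae_of_all _ hf_bound)⟩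

theorem Finset.sum_Icc_succ_eq_sub_of_telescoping {E : Type*} [AddCommGroup E] {u a : ℕ → E}
    (hu : ∀ j, u (j + 1) = a j - a (j + 1)) {n M : ℕ} (hnM : n ≤ M) :
    ∑ j ∈ Icc (n + 1) M, u j = a n - a M := by
  rw [← Ico_add_one_right_eq_Icc, ← sum_Ico_add' u, ← neg_sub, ← sum_Ico_sub a hnM,
    ← sum_neg_distrib]
  simp only [hu, neg_sub]

theorem tendsto_sum_Icc_succ_of_telescoping {E : Type*} [AddCommGroup E] [TopologicalSpace E]
    [IsTopologicalAddGroup E] {u a : ℕ → E} (hu : ∀ j, u (j + 1) = a j - a (j + 1))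
    (ha : Tendsto a atTop (nhds 0)) (n : ℕ) :
    Tendsto (fun M => ∑ j ∈ Icc (n + 1) M, u j) atTop (nhds (a n)) := by
  have hlim : Tendsto (fun M => a n - a M) atTop (nhds (a n)) := by
    simpa using tendsto_const_nhds.sub ha
  refine hlim.congr' ?_
  filter_upwards [eventually_ge_atTop n] with M hnM
  exact (sum_Icc_succ_eq_sub_of_telescoping hu hnM).symm

section DyadicProduct

variable {G : ℝ → ℝ}

theorem measurable_prod_comp_two_pow_mul (hG : Measurable G) (n : ℕ) :
    Measurable fun f : ℝ => ∏ l ∈ range n, G (2 ^ l * f) :=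
  Finset.measurable_prod _ fun _ _ => hG.comp (measurable_const_mul _)

theorem abs_prod_comp_two_pow_mul_le {C : ℝ} (hC : ∀ f, |G f| ≤ C) (n : ℕ) (f : ℝ) :
    |∏ l ∈ range n, G (2 ^ l * f)| ≤ C ^ n := by
  rw [abs_prod]
  exact (prod_le_prod (fun _ _ => abs_nonneg _) fun l _ => hC (2 ^ l * f)).trans_eq (by simp)

theorem intervalIntegrable_prod_comp_two_pow_mul_mul (hGmeas : Measurable G)
    (hGbd : ∃ C : ℝ, ∀ f : ℝ, |G f| ≤ C) {S : ℝ → ℝ} {μ : Measure ℝ} {a b : ℝ}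
    (hS : IntervalIntegrable S μ a b) (n : ℕ) :
    IntervalIntegrable (fun f => (∏ l ∈ range n, G (2 ^ l * f)) * S f) μ a b := by
  obtain ⟨C, hC⟩ := hGbd
  exact hS.bdd_mul (measurable_prod_comp_two_pow_mul hGmeas n).aestronglyMeasurable
    (abs_prod_comp_two_pow_mul_le hC n)

end DyadicProduct

theorem waveletCov_succ {H G S : ℝ → ℝ} (hGmeas : Measurable G)
    (hGbd : ∃ C : ℝ, ∀ f : ℝ, |G f| ≤ C) (hHG : ∀ f : ℝ, H f + G f = 1)
    (hS : IntervalIntegrable S volume (-(1 : ℝ) / 2) (1 / 2)) (n : ℕ) :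
    waveletCov H G S (n + 1) = scalingCov G S n - scalingCov G S (n + 1) := by
  have hH (f : ℝ) : H (2 ^ n * f) = 1 - G (2 ^ n * f) := eq_sub_of_add_eq (hHG _)
  have hint := intervalIntegrable_prod_comp_two_pow_mul_mul hGmeas hGbd hS
  unfold waveletCov scalingCov
  rw [← intervalIntegral.integral_sub (hint n) (hint (n + 1))]
  refine intervalIntegral.integral_congr fun f _ => ?_
  simp only [Nat.add_sub_cancel, prod_range_succ, hH]
  ring

theorem tail_waveletCov_eq_scalingCov_general (H G S : ℝ → ℝ)
    (hGmeas : Measurable G)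
    (hGbd : ∃ C : ℝ, ∀ f : ℝ, |G f| ≤ C)
    (hHG : ∀ f : ℝ, H f + G f = 1)
    (hS : IntervalIntegrable S volume (-(1 : ℝ) / 2) (1 / 2))
    (hC0 : Tendsto (fun J : ℕ => scalingCov G S J) atTop (nhds 0))
    (J : ℕ) (hJ : 1 ≤ J) :
    Tendsto (fun M : ℕ => ∑ j ∈ Finset.Icc J M, waveletCov H G S j) atTop
      (nhds (scalingCov G S (J - 1))) := by
  obtain ⟨n, rfl⟩ : ∃ n, J = n + 1 := ⟨J - 1, by omega⟩
  simpa using tendsto_sum_Icc_succ_of_telescoping (waveletCov_succ hGmeas hGbd hHG hS) hC0 n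

/-- For bounded measurable `H, G` with `H + G = 1` and `S` integrable on `[−1/2, 1/2]`:
if `C_J → 0` as `J → ∞`, then for every `J ≥ 1` the tail of the wavelet covariance series
equals the scaling covariance one level below: `∑_{j=J}^∞ γ_j = C_{J−1}`. -/
theorem tail_waveletCov_eq_scalingCov (H G S : ℝ → ℝ)
    (hHmeas : Measurable H) (hGmeas : Measurable G)
    (hHbd : ∃ C : ℝ, ∀ f : ℝ, |H f| ≤ C) (hGbd : ∃ C : ℝ, ∀ f : ℝ, |G f| ≤ C)
    (hHG : ∀ f : ℝ, H f + G f = 1)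
    (hS : IntervalIntegrable S volume (-(1 : ℝ) / 2) (1 / 2))
    (hC0 : Tendsto (fun J : ℕ => scalingCov G S J) atTop (nhds 0))
    (J : ℕ) (hJ : 1 ≤ J) :
    Tendsto (fun M : ℕ => ∑ j ∈ Finset.Icc J M, waveletCov H G S j) atTop
      (nhds (scalingCov G S (J - 1))) :=
  tail_waveletCov_eq_scalingCov_general H G S hGmeas hGbd hHG hS hC0 J hJ
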